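/- Discrete energy stability of the fully discrete semi-implicit first-order scheme: if γ is even and positive semidefinite, K_N is a set of grid functions with V ∈ K_N, and U* ∈ K_N minimizes J_N over K_N (i.e. J_N(U*) ≤ J_N(U) for all U ∈ K_N), then E_N(U*) ≤ J_N(U*) ≤ J_N(V) = E_N(V). -/

import Mathlib

/-! Writing `W = U - V`, evenness of `γ` makes `U ↦ ⟨γ⊛U, U⟩` a symmetric quadratic form, so the
explicit part of `J_N` is its tangent at `V` and `J_N(U) - E_N(U) = ½⟨γ⊛W, W⟩ + (1/2τ)‖W‖² ≥ 0`.
The middle inequality is minimality tested against `V`, and `J_N(V) = E_N(V)` since `W = 0`. -/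

noncomputable section

/-- The discrete grid `Γ = (ℤ/N₁ℤ) × (ℤ/N₂ℤ)`. -/
abbrev Grid (N₁ N₂ : ℕ) := ZMod N₁ × ZMod N₂

variable {N₁ N₂ : ℕ} [NeZero N₁] [NeZero N₂]

/-- Discrete inner product `⟨U,V⟩ = h Σ_p U_p V_p`. -/
def dip (h : ℝ) (U V : Grid N₁ N₂ → ℝ) : ℝ := h * ∑ p : Grid N₁ N₂, U p * V p

/-- Discrete circular convolution `(γ ⊛ U)_p = h Σ_q γ_{p−q} U_q`. -/
def dconv (h : ℝ) (γ U : Grid N₁ N₂ → ℝ) : Grid N₁ N₂ → ℝ :=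
  fun p => h * ∑ q : Grid N₁ N₂, γ (p - q) * U q

/-- Discrete energy
`E_N(U) = h Σ_p [ (ξ/2)U_p² + c + ψ(U_p) ] − (1/2)⟨γ⊛U, U⟩`. -/
def dEnergy (h ξ c : ℝ) (ψ : ℝ → ℝ) (γ : Grid N₁ N₂ → ℝ) (U : Grid N₁ N₂ → ℝ) : ℝ :=
  h * ∑ p : Grid N₁ N₂, (ξ / 2 * (U p) ^ 2 + c + ψ (U p))
    - 1 / 2 * dip h (dconv h γ U) U

/-- Discrete one-step objective
`J_N(U) = h Σ_p [ (ξ/2)U_p² + c + ψ(U_p) ] − (1/2)⟨γ⊛V, V⟩ − ⟨γ⊛V, U − V⟩ + (1/(2τ))‖U − V‖²`. -/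
def dObj (h τ ξ c : ℝ) (ψ : ℝ → ℝ) (γ : Grid N₁ N₂ → ℝ) (V U : Grid N₁ N₂ → ℝ) : ℝ :=
  h * ∑ p : Grid N₁ N₂, (ξ / 2 * (U p) ^ 2 + c + ψ (U p))
    - 1 / 2 * dip h (dconv h γ V) V - dip h (dconv h γ V) (U - V)
    + 1 / (2 * τ) * dip h (U - V) (U - V)

theorem dconv_sub (h : ℝ) (γ U V : Grid N₁ N₂ → ℝ) :
    dconv h γ (U - V) = dconv h γ U - dconv h γ V := by
  funext p
  simp only [dconv, Pi.sub_apply, mul_sub, Finset.sum_sub_distrib]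

theorem dip_sub_left (h : ℝ) (U V W : Grid N₁ N₂ → ℝ) :
    dip h (U - V) W = dip h U W - dip h V W := by
  simp only [dip, Pi.sub_apply, sub_mul, Finset.sum_sub_distrib, mul_sub]

theorem dip_sub_right (h : ℝ) (U V W : Grid N₁ N₂ → ℝ) :
    dip h U (V - W) = dip h U V - dip h U W := by
  simp only [dip, Pi.sub_apply, mul_sub, Finset.sum_sub_distrib]

theorem dip_self_nonneg {h : ℝ} (hh : 0 ≤ h) (U : Grid N₁ N₂ → ℝ) : 0 ≤ dip h U U :=
  mul_nonneg hh (Finset.sum_nonneg fun _ _ => mul_self_nonneg _)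

theorem dip_dconv_comm (h : ℝ) {γ : Grid N₁ N₂ → ℝ} (hγ : ∀ p, γ (-p) = γ p)
    (U V : Grid N₁ N₂ → ℝ) : dip h (dconv h γ U) V = dip h (dconv h γ V) U := by
  simp only [dip, dconv, Finset.mul_sum, Finset.sum_mul]
  rw [Finset.sum_comm]
  refine Finset.sum_congr rfl fun p _ => Finset.sum_congr rfl fun q _ => ?_
  rw [← hγ (p - q), neg_sub]
  ring

theorem dip_dconv_sub_sub (h : ℝ) {γ : Grid N₁ N₂ → ℝ} (hγ : ∀ p, γ (-p) = γ p)
    (U V : Grid N₁ N₂ → ℝ) :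
    dip h (dconv h γ (U - V)) (U - V) =
      dip h (dconv h γ U) U - 2 * dip h (dconv h γ V) (U - V) - dip h (dconv h γ V) V := by
  rw [dconv_sub, dip_sub_left, dip_sub_right, dip_sub_right,
    dip_dconv_comm h hγ U V]
  ring

theorem dObj_sub_dEnergy (h τ ξ c : ℝ) (ψ : ℝ → ℝ) {γ : Grid N₁ N₂ → ℝ}
    (hγ : ∀ p, γ (-p) = γ p) (V U : Grid N₁ N₂ → ℝ) :
    dObj h τ ξ c ψ γ V U - dEnergy h ξ c ψ γ U =
      1 / 2 * dip h (dconv h γ (U - V)) (U - V) + 1 / (2 * τ) * dip h (U - V) (U - V) := by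
  rw [dip_dconv_sub_sub h hγ, dObj, dEnergy]
  ring

theorem dEnergy_le_dObj {h τ : ℝ} (hh : 0 ≤ h) (hτ : 0 ≤ τ) (ξ c : ℝ) (ψ : ℝ → ℝ)
    {γ : Grid N₁ N₂ → ℝ} (hγ : ∀ p, γ (-p) = γ p)
    (hpsd : ∀ W, 0 ≤ dip h (dconv h γ W) W) (V U : Grid N₁ N₂ → ℝ) :
    dEnergy h ξ c ψ γ U ≤ dObj h τ ξ c ψ γ V U := by
  have hgap := dObj_sub_dEnergy h τ ξ c ψ hγ V U
  have hconv := hpsd (U - V)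
  have hnorm := mul_nonneg (by positivity : 0 ≤ 1 / (2 * τ)) (dip_self_nonneg hh (U - V))
  linarith

theorem dObj_self (h τ ξ c : ℝ) (ψ : ℝ → ℝ) (γ V : Grid N₁ N₂ → ℝ) :
    dObj h τ ξ c ψ γ V V = dEnergy h ξ c ψ γ V := by
  simp only [dObj, dEnergy, sub_self, dip, Pi.zero_apply, mul_zero, Finset.sum_const_zero]
  ring

theorem discrete_energy_stability_first_order_general
    {N₁ N₂ : ℕ} [NeZero N₁] [NeZero N₂] (h : ℝ) (hh : 0 < h)
    (τ : ℝ) (hτ : 0 < τ) (ξ : ℝ) (c : ℝ) (ψ : ℝ → ℝ)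
    (γ : Grid N₁ N₂ → ℝ)
    (hγeven : ∀ p : Grid N₁ N₂, γ (-p) = γ p)
    (hγpsd : ∀ W : Grid N₁ N₂ → ℝ, 0 ≤ dip h (dconv h γ W) W)
    (KN : Set (Grid N₁ N₂ → ℝ))
    (V : Grid N₁ N₂ → ℝ) (hV : V ∈ KN)
    (Ustar : Grid N₁ N₂ → ℝ)
    (hmin : ∀ U ∈ KN, dObj h τ ξ c ψ γ V Ustar ≤ dObj h τ ξ c ψ γ V U) :
    dEnergy h ξ c ψ γ Ustar ≤ dObj h τ ξ c ψ γ V Ustar ∧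
      dObj h τ ξ c ψ γ V Ustar ≤ dObj h τ ξ c ψ γ V V ∧
      dObj h τ ξ c ψ γ V V = dEnergy h ξ c ψ γ V := by
  exact ⟨dEnergy_le_dObj hh.le hτ.le ξ c ψ hγeven hγpsd V Ustar, hmin V hV,
    dObj_self h τ ξ c ψ γ V⟩

/-- **Discrete energy stability of the fully discrete semi-implicit first-order scheme**:
if `γ` is even and positive semidefinite, `V ∈ K_N`, and `U* ∈ K_N` minimizes `J_N` over
`K_N`, then `E_N(U*) ≤ J_N(U*) ≤ J_N(V) = E_N(V)`. -/
theorem discrete_energy_stability_first_order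
    {N₁ N₂ : ℕ} [NeZero N₁] [NeZero N₂] (h : ℝ) (hh : 0 < h)
    (τ : ℝ) (hτ : 0 < τ) (ξ : ℝ) (hξ : 0 ≤ ξ) (c : ℝ) (ψ : ℝ → ℝ)
    (γ : Grid N₁ N₂ → ℝ)
    (hγeven : ∀ p : Grid N₁ N₂, γ (-p) = γ p)
    (hγpsd : ∀ W : Grid N₁ N₂ → ℝ, 0 ≤ dip h (dconv h γ W) W)
    (KN : Set (Grid N₁ N₂ → ℝ))
    (V : Grid N₁ N₂ → ℝ) (hV : V ∈ KN)
    (Ustar : Grid N₁ N₂ → ℝ) (hUstar : Ustar ∈ KN)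
    (hmin : ∀ U ∈ KN, dObj h τ ξ c ψ γ V Ustar ≤ dObj h τ ξ c ψ γ V U) :
    dEnergy h ξ c ψ γ Ustar ≤ dObj h τ ξ c ψ γ V Ustar ∧
      dObj h τ ξ c ψ γ V Ustar ≤ dObj h τ ξ c ψ γ V V ∧
      dObj h τ ξ c ψ γ V V = dEnergy h ξ c ψ γ V :=
  discrete_energy_stability_first_order_general h hh τ hτ ξ c ψ γ hγeven hγpsd KN V hV Ustar hmin

end
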